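/- Let H be a Hermitian n×n complex matrix and let β > 0. Define the Gibbs state ρ_Gibbs = e^{−βH}/Tr(e^{−βH}) and the free energy functional F(D) = Tr(H D) − (1/β) S(D). Then for every density matrix D on ℂ^n one has F(ρ_Gibbs) ≤ F(D); moreover F(ρ_Gibbs) = −(1/β) log Tr(e^{−βH}). -/

import Mathlib

/-!
Diagonalise `D = ∑ pᵢ uᵢ uᵢ*` and put `eᵢ = ⟨uᵢ, H uᵢ⟩`, so that
`β F(D) = β ∑ pᵢ eᵢ - ∑ η(pᵢ)` with `η = negMulLog`. The classical Gibbs variational principle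
`∑ η(pᵢ) + ∑ pᵢ aᵢ ≤ log ∑ exp aᵢ`, applied to `aᵢ = -β eᵢ`, together with Peierls' inequality
`exp (-β ⟨u, H u⟩) ≤ ⟨u, exp (-β H) u⟩` for unit vectors `u` (Jensen's inequality for the
probability weights `|⟨vⱼ, u⟩|²` on the eigenvalues of `H`), gives `β F(D) ≥ -log Tr exp (-β H)`.
The Gibbs state is a function of `H`, so its free energy is computed in the eigenbasis of `H`,
where the bound is an equality.
-/

open scoped Kronecker ComplexOrder
open Matrix

noncomputable section

namespace TAL

/-- A density matrix: positive semidefinite with trace `1`. -/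
def IsDensityMatrix {k : Type*} [Fintype k] [DecidableEq k] (D : Matrix k k ℂ) : Prop :=
  D.PosSemidef ∧ D.trace = 1

/-- Functional calculus for Hermitian matrices via the spectral decomposition
(junk value `0` on non-Hermitian matrices). -/
def hermCalc {k : Type*} [Fintype k] [DecidableEq k] (f : ℝ → ℝ) (A : Matrix k k ℂ) :
    Matrix k k ℂ :=
  if hA : A.IsHermitian then
    (hA.eigenvectorUnitary : Matrix k k ℂ) *
      Matrix.diagonal (fun i => (f (hA.eigenvalues i) : ℂ)) *
        star (hA.eigenvectorUnitary : Matrix k k ℂ)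
  else 0

/-- Matrix logarithm via the spectral decomposition. -/
def matLog {k : Type*} [Fintype k] [DecidableEq k] (A : Matrix k k ℂ) : Matrix k k ℂ :=
  hermCalc Real.log A

/-- The von Neumann entropy `S(D) = -Tr (D log D)`, computed through the eigenvalues,
with the convention `0 * log 0 = 0` (junk value `0` on non-Hermitian matrices). -/
def vnEntropy {k : Type*} [Fintype k] [DecidableEq k] (A : Matrix k k ℂ) : ℝ :=
  if hA : A.IsHermitian then ∑ i, Real.negMulLog (hA.eigenvalues i) else 0

/-- The Umegaki relative entropy `S(D | E) = Tr (D (log D - log E))`. -/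
def relEntropy {k : Type*} [Fintype k] [DecidableEq k] (D E : Matrix k k ℂ) : ℝ :=
  ((D * (matLog D - matLog E)).trace).re

/-- Partial trace over the second (right) tensor factor. -/
def ptraceR {k₁ k₂ : Type*} [Fintype k₂] (D : Matrix (k₁ × k₂) (k₁ × k₂) ℂ) :
    Matrix k₁ k₁ ℂ :=
  Matrix.of fun i j => ∑ s : k₂, D (i, s) (j, s)

/-- Partial trace over the first (left) tensor factor. -/
def ptraceL {k₁ k₂ : Type*} [Fintype k₁] (D : Matrix (k₁ × k₂) (k₁ × k₂) ℂ) :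
    Matrix k₂ k₂ ℂ :=
  Matrix.of fun i j => ∑ s : k₁, D (s, i) (s, j)

/-- The mutual entropy `I_D(A:B) = S(D_A) + S(D_B) - S(D)`. -/
def mutualEntropy {k₁ k₂ : Type*} [Fintype k₁] [Fintype k₂] [DecidableEq k₁] [DecidableEq k₂]
    (D : Matrix (k₁ × k₂) (k₁ × k₂) ℂ) : ℝ :=
  vnEntropy (ptraceR D) + vnEntropy (ptraceL D) - vnEntropy D

/-- The Gibbs density matrix `e^{-β H} / Tr(e^{-β H})`. -/
def gibbs {k : Type*} [Fintype k] [DecidableEq k] (β : ℝ) (H : Matrix k k ℂ) :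
    Matrix k k ℂ :=
  (NormedSpace.exp ((-(β : ℂ)) • H)).trace⁻¹ • NormedSpace.exp ((-(β : ℂ)) • H)

/-- The free energy functional `F(D) = Tr(H D) - β⁻¹ S(D)` (real part of the trace). -/
def freeEnergy {k : Type*} [Fintype k] [DecidableEq k] (β : ℝ) (H D : Matrix k k ℂ) : ℝ :=
  ((H * D).trace).re - β⁻¹ * vnEntropy D

/-- The ℓ²-operator norm of a matrix. -/
def opNorm {k : Type*} [Fintype k] [DecidableEq k] (A : Matrix k k ℂ) : ℝ :=
  ‖(Matrix.toEuclideanCLM (𝕜 := ℂ) A : EuclideanSpace ℂ k →L[ℂ] EuclideanSpace ℂ k)‖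

/-- The trace norm `‖X‖₁ = Tr ((X* X)^{1/2})`. -/
def traceNorm {k : Type*} [Fintype k] [DecidableEq k] (X : Matrix k k ℂ) : ℝ :=
  (((Matrix.posSemidef_conjTranspose_mul_self X).1.eigenvectorUnitary.1 *
      Matrix.diagonal (fun i =>
        ((Real.sqrt ((Matrix.posSemidef_conjTranspose_mul_self X).1.eigenvalues i) : ℝ) : ℂ)) *
      (star (Matrix.posSemidef_conjTranspose_mul_self X).1.eigenvectorUnitary :
        Matrix k k ℂ)).trace).re


/-- The perturbed density matrix `D^h = e^{log D + h} / Tr(e^{log D + h})`. -/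
def pert {k : Type*} [Fintype k] [DecidableEq k] (D h : Matrix k k ℂ) : Matrix k k ℂ :=
  (NormedSpace.exp (matLog D + h)).trace⁻¹ • NormedSpace.exp (matLog D + h)

end TAL

namespace Real

theorem negMulLog_add_mul_log_le {p q : ℝ} (hp : 0 ≤ p) (hq : 0 < q) :
    negMulLog p + p * log q ≤ q - p := by
  rcases hp.eq_or_lt with rfl | hp
  · simpa using hq.le
  · have h := mul_le_mul_of_nonneg_left (log_le_sub_one_of_pos (div_pos hq hp)) hp.le
    rw [log_div hq.ne' hp.ne', mul_sub_one, mul_div_cancel₀ q hp.ne'] at h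
    rw [negMulLog]
    linarith

theorem sum_negMulLog_add_mul_le_log_sum_exp {ι : Type*} [Fintype ι] {p : ι → ℝ}
    (hp : ∀ i, 0 ≤ p i) (hp1 : ∑ i, p i = 1) (a : ι → ℝ) :
    ∑ i, (negMulLog (p i) + p i * a i) ≤ log (∑ i, exp (a i)) := by
  have : Nonempty ι := by
    by_contra h
    simp [not_nonempty_iff.mp h] at hp1
  set Z := ∑ i, exp (a i) with hZ
  have hZ_pos : 0 < Z := Finset.sum_pos (fun i _ => exp_pos _) Finset.univ_nonempty
  have hterm (i : ι) := negMulLog_add_mul_log_le (hp i) (div_pos (exp_pos (a i)) hZ_pos)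
  simp only [log_div (exp_ne_zero _) hZ_pos.ne', log_exp] at hterm
  have hsum := Finset.sum_le_sum fun i (_ : i ∈ Finset.univ) => hterm i
  simp only [mul_sub, Finset.sum_add_distrib, Finset.sum_sub_distrib, ← Finset.sum_mul,
    ← Finset.sum_div, hp1, ← hZ, div_self hZ_pos.ne'] at hsum
  rw [Finset.sum_add_distrib]
  linarith

end Real

namespace Matrix

variable {𝕜 n : Type*} [RCLike 𝕜] [Fintype n]

theorem star_mul_mul_apply_self (U M : Matrix n n 𝕜) (i : n) :
    (star U * M * U) i i = star (Uᵀ i) ⬝ᵥ M *ᵥ Uᵀ i := by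
  rw [mul_mul_apply]
  rfl

variable [DecidableEq n]

theorem trace_eq_sum_star_dotProduct_mulVec {U : Matrix n n 𝕜} (hU : U ∈ unitaryGroup n 𝕜)
    (M : Matrix n n 𝕜) :
    M.trace = ∑ i, star (Uᵀ i) ⬝ᵥ M *ᵥ Uᵀ i := by
  calc M.trace = (star U * M * U).trace := by
        rw [mul_assoc, trace_mul_comm, mul_assoc, Unitary.mul_star_self_of_mem hU, mul_one]
    _ = _ := by simp only [trace, diag_apply, star_mul_mul_apply_self]

theorem star_dotProduct_transpose_self {U : Matrix n n 𝕜} (hU : U ∈ unitaryGroup n 𝕜) (i : n) :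
    star (Uᵀ i) ⬝ᵥ Uᵀ i = 1 := by
  have h := star_mul_mul_apply_self U 1 i
  rwa [mul_one, Unitary.star_mul_self_of_mem hU, one_apply_eq, one_mulVec, eq_comm] at h

namespace IsHermitian

variable {A : Matrix n n 𝕜}

theorem trace_cfc (hA : A.IsHermitian) (f : ℝ → ℝ) :
    (cfc f A).trace = ∑ i, (f (hA.eigenvalues i) : 𝕜) := by
  rw [hA.cfc_eq, IsHermitian.cfc, Unitary.conjStarAlgAut_apply, trace_mul_cycle,
    Unitary.coe_star_mul_self, one_mul, trace_diagonal]
  rfl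

theorem trace_mul_eq_sum_eigenvalues_mul (hA : A.IsHermitian) (M : Matrix n n 𝕜) :
    (M * A).trace = ∑ i, (hA.eigenvalues i : 𝕜) *
      (star ((hA.eigenvectorUnitary : Matrix n n 𝕜)ᵀ i) ⬝ᵥ
        M *ᵥ (hA.eigenvectorUnitary : Matrix n n 𝕜)ᵀ i) := by
  conv_lhs => rw [hA.spectral_theorem, Unitary.conjStarAlgAut_apply, ← mul_assoc, ← mul_assoc,
    trace_mul_comm, ← mul_assoc, ← mul_assoc, trace]
  simp only [diag_apply, mul_diagonal, star_mul_mul_apply_self, Function.comp_apply]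
  exact Finset.sum_congr rfl fun i _ => mul_comm _ _

theorem star_dotProduct_cfc_mulVec (hA : A.IsHermitian) (f : ℝ → ℝ) (u : n → 𝕜) :
    star u ⬝ᵥ cfc f A *ᵥ u =
      ((∑ j, ‖(star (hA.eigenvectorUnitary : Matrix n n 𝕜) *ᵥ u) j‖ ^ 2 *
        f (hA.eigenvalues j) : ℝ) : 𝕜) := by
  set V := (hA.eigenvectorUnitary : Matrix n n 𝕜)
  have hV : star u ᵥ* V = star (star V *ᵥ u) := by
    rw [star_mulVec, star_eq_conjTranspose, conjTranspose_conjTranspose]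
  rw [hA.cfc_eq, IsHermitian.cfc, Unitary.conjStarAlgAut_apply, ← mulVec_mulVec,
    ← mulVec_mulVec, dotProduct_mulVec, hV]
  simp only [dotProduct, mulVec_diagonal, Pi.star_apply, Function.comp_apply, RCLike.star_def]
  push_cast
  refine Finset.sum_congr rfl fun j _ => ?_
  rw [← RCLike.conj_mul]
  ring

theorem map_re_star_dotProduct_mulVec_le (hA : A.IsHermitian) {f : ℝ → ℝ} {s : Set ℝ}
    (hf : ConvexOn ℝ s f) (hs : ∀ i, hA.eigenvalues i ∈ s) {u : n → 𝕜}
    (hu : star u ⬝ᵥ u = 1) :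
    f (RCLike.re (star u ⬝ᵥ A *ᵥ u)) ≤ RCLike.re (star u ⬝ᵥ cfc f A *ᵥ u) := by
  set w : n → ℝ := fun j => ‖(star (hA.eigenvectorUnitary : Matrix n n 𝕜) *ᵥ u) j‖ ^ 2
  have hw : ∑ j, w j = 1 := by
    have h := hA.star_dotProduct_cfc_mulVec (fun _ => 1) u
    rw [cfc_const_one ℝ A, one_mulVec, hu] at h
    simp only [mul_one] at h
    exact_mod_cast h.symm
  conv_lhs => rw [← cfc_id' ℝ A hA.isSelfAdjoint]
  rw [hA.star_dotProduct_cfc_mulVec, hA.star_dotProduct_cfc_mulVec, RCLike.ofReal_re,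
    RCLike.ofReal_re]
  simpa using hf.map_sum_le (t := Finset.univ) (w := w) (p := hA.eigenvalues)
    (fun j _ => by positivity) hw (fun j _ => hs j)

theorem exp_smul_eq_cfc (hA : A.IsHermitian) (c : ℝ) :
    NormedSpace.exp (c • A) = cfc (fun x => Real.exp (c * x)) A := by
  set U := (hA.eigenvectorUnitary : Matrix n n 𝕜)
  have hconj (M : Matrix n n 𝕜) :
      NormedSpace.exp (U * M * star U) = U * NormedSpace.exp M * star U := by
    simpa [Unitary.toUnits] using exp_units_conj (Unitary.toUnits hA.eigenvectorUnitary) M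
  rw [← cfc_const_mul_id c A, hA.cfc_eq, hA.cfc_eq, IsHermitian.cfc, IsHermitian.cfc,
    Unitary.conjStarAlgAut_apply, Unitary.conjStarAlgAut_apply, hconj, exp_diagonal]
  congr 3
  funext i
  simp only [Pi.exp_def, Function.comp_apply, Real.exp_eq_exp_ℝ]
  rw [← RCLike.algebraMap_eq_ofReal, NormedSpace.algebraMap_exp_comm, map_mul]

end IsHermitian

end Matrix

namespace TAL

open Real

variable {k : Type*} [Fintype k] [DecidableEq k] {H : Matrix k k ℂ} {β : ℝ}

theorem re_trace_cfc {A : Matrix k k ℂ} (hA : A.IsHermitian) (f : ℝ → ℝ) :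
    (cfc f A).trace.re = ∑ i, f (hA.eigenvalues i) := by
  simp [hA.trace_cfc]

theorem vnEntropy_eq_re_trace_cfc {A : Matrix k k ℂ} (hA : A.IsHermitian) :
    vnEntropy A = (cfc negMulLog A).trace.re := by
  rw [vnEntropy, dif_pos hA, re_trace_cfc hA]

theorem vnEntropy_cfc {A : Matrix k k ℂ} (hA : A.IsHermitian) (f : ℝ → ℝ) :
    vnEntropy (cfc f A) = ∑ i, negMulLog (f (hA.eigenvalues i)) := by
  rw [vnEntropy_eq_re_trace_cfc (cfc_predicate f A),
    ← cfc_comp' negMulLog f A continuous_negMulLog.continuousOn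
      (finite_real_spectrum.continuousOn f), re_trace_cfc hA]

theorem trace_exp_neg_smul (hH : H.IsHermitian) (β : ℝ) :
    (NormedSpace.exp ((-(β : ℂ)) • H)).trace = ∑ i, (exp (-β * hH.eigenvalues i) : ℂ) := by
  rw [← Complex.ofReal_neg, Complex.coe_smul, hH.exp_smul_eq_cfc, hH.trace_cfc]
  simp

theorem gibbs_eq_cfc (hH : H.IsHermitian) (β : ℝ) :
    gibbs β H = cfc (fun x => (∑ i, exp (-β * hH.eigenvalues i))⁻¹ * exp (-β * x)) H := by
  rw [gibbs, trace_exp_neg_smul hH, cfc_const_mul _ _ H (finite_real_spectrum.continuousOn _),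
    ← Complex.ofReal_neg, Complex.coe_smul, hH.exp_smul_eq_cfc, ← Complex.ofReal_sum,
    ← Complex.ofReal_inv, Complex.coe_smul]

theorem freeEnergy_gibbs [Nonempty k] (hH : H.IsHermitian) (hβ : β ≠ 0) :
    freeEnergy β H (gibbs β H) = -β⁻¹ * log (∑ i, exp (-β * hH.eigenvalues i)) := by
  set Z := ∑ i, exp (-β * hH.eigenvalues i) with hZ
  have hZ_pos : 0 < Z := Finset.sum_pos (fun i _ => exp_pos _) Finset.univ_nonempty
  set g : ℝ → ℝ := fun x => Z⁻¹ * exp (-β * x)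
  have hg_sum : ∑ i, g (hH.eigenvalues i) = 1 := by
    rw [← Finset.mul_sum, ← hZ, inv_mul_cancel₀ hZ_pos.ne']
  have hg_entropy (x : ℝ) : negMulLog (g x) = g x * log Z + β * (x * g x) := by
    rw [negMulLog, log_mul (inv_ne_zero hZ_pos.ne') (exp_ne_zero _), log_inv, log_exp]
    ring
  have hH_mul : H * cfc g H = cfc (fun x => x * g x) H := by
    rw [cfc_mul (fun x => x) g H, cfc_id' ℝ H]
  have hρ : gibbs β H = cfc g H := gibbs_eq_cfc hH β
  rw [freeEnergy, hρ, vnEntropy_cfc hH, hH_mul, re_trace_cfc hH]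
  simp only [hg_entropy, Finset.sum_add_distrib, ← Finset.sum_mul, ← Finset.mul_sum, hg_sum]
  field_simp
  ring

theorem neg_inv_mul_log_le_freeEnergy [Nonempty k] (hH : H.IsHermitian) (hβ : 0 < β)
    {D : Matrix k k ℂ} (hD : IsDensityMatrix D) :
    -β⁻¹ * log (∑ i, exp (-β * hH.eigenvalues i)) ≤ freeEnergy β H D := by
  obtain ⟨hD_psd, hD_trace⟩ := hD
  have hD_herm := hD_psd.isHermitian
  set U := hD_herm.eigenvectorUnitary
  set p := hD_herm.eigenvalues
  set e : k → ℝ := fun i => (star ((U : Matrix k k ℂ)ᵀ i) ⬝ᵥ H *ᵥ (U : Matrix k k ℂ)ᵀ i).re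
  have hp_nonneg : ∀ i, 0 ≤ p i := hD_psd.eigenvalues_nonneg
  have hp_sum : ∑ i, p i = 1 := by
    have h := congrArg Complex.re (hD_herm.trace_eq_sum_eigenvalues.symm.trans hD_trace)
    simpa using h
  have hT : (H * D).trace.re = ∑ i, p i * e i := by
    rw [hD_herm.trace_mul_eq_sum_eigenvalues_mul]
    simp only [Complex.re_sum, RCLike.ofReal_eq_complex_ofReal, Complex.re_ofReal_mul]
    rfl
  have hPeierls (i : k) : exp (-β * e i) ≤
      (star ((U : Matrix k k ℂ)ᵀ i) ⬝ᵥ cfc (fun x => exp (-β * x)) H *ᵥ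
        (U : Matrix k k ℂ)ᵀ i).re :=
    hH.map_re_star_dotProduct_mulVec_le (convexOn_exp.comp_linearMap (LinearMap.lsmul ℝ ℝ (-β)))
      (fun _ => Set.mem_univ _) (star_dotProduct_transpose_self U.2 i)
  have hZ : ∑ i, (star ((U : Matrix k k ℂ)ᵀ i) ⬝ᵥ cfc (fun x => exp (-β * x)) H *ᵥ
        (U : Matrix k k ℂ)ᵀ i).re = ∑ i, exp (-β * hH.eigenvalues i) := by
    rw [← Complex.re_sum, ← trace_eq_sum_star_dotProduct_mulVec U.2, re_trace_cfc hH]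
  have hGibbs := sum_negMulLog_add_mul_le_log_sum_exp hp_nonneg hp_sum fun i => -β * e i
  have hlog_le : log (∑ i, exp (-β * e i)) ≤ log (∑ i, exp (-β * hH.eigenvalues i)) :=
    log_le_log (Finset.sum_pos (fun i _ => exp_pos _) Finset.univ_nonempty)
      (hZ ▸ Finset.sum_le_sum fun i _ => hPeierls i)
  have hkey : ∑ i, negMulLog (p i) - β * ∑ i, p i * e i ≤
      log (∑ i, exp (-β * hH.eigenvalues i)) := by
    simp only [mul_left_comm _ (-β), ← Finset.mul_sum, Finset.sum_add_distrib] at hGibbs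
    linarith
  have h := mul_le_mul_of_nonneg_left hkey (inv_nonneg.2 hβ.le)
  rw [mul_sub, ← mul_assoc, inv_mul_cancel₀ hβ.ne', one_mul] at h
  rw [freeEnergy, vnEntropy, dif_pos hD_herm, hT]
  linarith

/-- The Gibbs state minimizes the free energy functional, and its free
energy equals `-(1/β) log Tr(e^{-βH})`. -/
theorem gibbs_minimizes_freeEnergy {n : ℕ} (H : Matrix (Fin n) (Fin n) ℂ)
    (hH : H.IsHermitian) (β : ℝ) (hβ : 0 < β) :
    (∀ D : Matrix (Fin n) (Fin n) ℂ, IsDensityMatrix D →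
      freeEnergy β H (gibbs β H) ≤ freeEnergy β H D) ∧
    freeEnergy β H (gibbs β H) =
      -β⁻¹ * Real.log (((NormedSpace.exp ((-(β : ℂ)) • H)).trace).re) := by
  rcases isEmpty_or_nonempty (Fin n) with hn | hn
  · simp [freeEnergy, vnEntropy, IsDensityMatrix, trace]
  · have hZ : ((NormedSpace.exp ((-(β : ℂ)) • H)).trace).re =
        ∑ i, exp (-β * hH.eigenvalues i) := by
      rw [trace_exp_neg_smul hH, ← Complex.ofReal_sum, Complex.ofReal_re]
    rw [hZ, freeEnergy_gibbs hH hβ.ne']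
    exact ⟨fun D hD => neg_inv_mul_log_le_freeEnergy hH hβ hD, rfl⟩

end TAL
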